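/- At the Dubrovin–Mazzocco singular point p₁ = (a,2,2), the derivative of g_x = s_z ∘ s_y (with A=B=C=2a+4, D=-(a²+8a+8)) has eigenvalues λ₁ = a²/2 - 1 + √(a⁴-4a²)/2, λ₂ = a²/2 - 1 - √(a⁴-4a²)/2, and λ₃ = 1; in particular for real a ∈ (-2,0)∪(0,2) the eigenvalues λ₁, λ₂ are a complex conjugate pair each of modulus one. -/

import Mathlib

/-!
The Jacobian of `gxMap` at `(a, 2, 2)` is block lower triangular: the `x`-coordinate contributes
the eigenvalue `1`, and the remaining `2 × 2` block has trace `a² - 2` and determinant `1`, so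
`λ₁, λ₂` are the roots `c/2 ± s/2` of `λ² - cλ + 1` with `c = a² - 2` and `s² = c² - 4`.
For real `a` with `0 < a² < 4` we have `c² < 4`, so `s` is purely imaginary, `λ₂ = conj λ₁`,
and `λ₁ λ₂ = 1` forces `|λ₁| = 1`.
-/

noncomputable section

def gxMap (B C : ℂ) : ℂ × ℂ × ℂ → ℂ × ℂ × ℂ :=
  fun p => (p.1, -p.2.1 - p.1 * p.2.2 + B,
    p.1 * p.2.1 + (p.1 ^ 2 - 1) * p.2.2 + C - B * p.1)

def Jgx (a : ℂ) : Matrix (Fin 3) (Fin 3) ℂ :=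
  !![1, 0, 0; -2, -1, -a; 2 * a - 2, a, a ^ 2 - 1]

theorem fderiv_gxMap_apply (B C : ℂ) (p v : ℂ × ℂ × ℂ) :
    fderiv ℂ (gxMap B C) p v =
      (v.1, -v.2.1 - v.1 * p.2.2 - p.1 * v.2.2,
        v.1 * p.2.1 + p.1 * v.2.1 + 2 * p.1 * v.1 * p.2.2 + (p.1 ^ 2 - 1) * v.2.2 - B * v.1) := by
  have hx : HasFDerivAt (fun q : ℂ × ℂ × ℂ => q.1) (ContinuousLinearMap.fst ℂ ℂ (ℂ × ℂ)) p :=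
    hasFDerivAt_fst
  have hy : HasFDerivAt (fun q : ℂ × ℂ × ℂ => q.2.1)
      ((ContinuousLinearMap.fst ℂ ℂ ℂ).comp (ContinuousLinearMap.snd ℂ ℂ (ℂ × ℂ))) p :=
    hasFDerivAt_snd.fst
  have hz : HasFDerivAt (fun q : ℂ × ℂ × ℂ => q.2.2)
      ((ContinuousLinearMap.snd ℂ ℂ ℂ).comp (ContinuousLinearMap.snd ℂ ℂ (ℂ × ℂ))) p :=
    hasFDerivAt_snd.snd
  have hg : HasFDerivAt (gxMap B C) _ p :=
    hx.prodMk (((hy.neg.sub (hx.mul hz)).add_const B).prodMk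
      ((((hx.mul hy).add (((hx.pow 2).sub_const 1).mul hz)).add_const C).sub (hx.const_mul B)))
  rw [hg.fderiv]
  simp only [ContinuousLinearMap.prod_apply, ContinuousLinearMap.coe_fst', sub_apply, neg_apply,
    ContinuousLinearMap.comp_apply, ContinuousLinearMap.coe_snd', add_apply, smul_apply,
    smul_eq_mul, nsmul_eq_mul, Prod.mk.injEq, true_and]
  constructor <;> ring

theorem det_smul_one_sub_Jgx (a lam : ℂ) :
    Matrix.det (lam • (1 : Matrix (Fin 3) (Fin 3) ℂ) - Jgx a)
      = (lam ^ 2 - (a ^ 2 - 2) * lam + 1) * (lam - 1) := by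
  simp only [Jgx, Matrix.det_fin_three, Fin.isValue, Matrix.sub_apply, Matrix.smul_apply,
    Matrix.one_apply_eq, Matrix.one_apply_ne, ne_eq, Fin.reduceEq, not_false_eq_true, smul_eq_mul,
    Matrix.of_apply, Matrix.cons_val', Matrix.cons_val_zero, Matrix.cons_val_fin_one,
    Matrix.cons_val_one, Matrix.cons_val]
  ring

theorem quadratic_eq_mul_of_sq_eq_discrim {c s : ℂ} (hs : s ^ 2 = c ^ 2 - 4) (lam : ℂ) :
    lam ^ 2 - c * lam + 1 = (lam - (c / 2 + s / 2)) * (lam - (c / 2 - s / 2)) := by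
  linear_combination (1 / 4 : ℂ) * hs

namespace Complex

open ComplexConjugate

theorem conj_eq_neg_of_sq_eq_neg_ofReal {s : ℂ} {r : ℝ} (hr : 0 < r) (hs : s ^ 2 = -r) :
    conj s = -s := by
  have hre : s.re ^ 2 - s.im ^ 2 = -r := by simpa [sq] using congrArg re hs
  have him : s.re * s.im = 0 := by
    have := congrArg im hs
    simp only [sq, mul_im, neg_im, ofReal_im, neg_zero] at this
    linarith
  have hre0 : s.re = 0 := (mul_eq_zero.mp him).resolve_right fun h ↦ by
    rw [h] at hre; nlinarith [sq_nonneg s.re]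
  exact ext (by simp [hre0]) (by simp)

theorem norm_eq_one_of_mul_conj_eq_one {z : ℂ} (h : z * conj z = 1) : ‖z‖ = 1 := by
  rw [mul_conj'] at h
  exact (pow_eq_one_iff_of_nonneg (norm_nonneg z) two_ne_zero).mp (by exact_mod_cast h)

theorem conj_unit_pair_of_sq_lt_four {c : ℝ} {s : ℂ} (hc : c ^ 2 < 4)
    (hs : s ^ 2 = (c : ℂ) ^ 2 - 4) :
    ‖(c : ℂ) / 2 + s / 2‖ = 1 ∧ ‖(c : ℂ) / 2 - s / 2‖ = 1 ∧
      (c : ℂ) / 2 - s / 2 = conj ((c : ℂ) / 2 + s / 2) := by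
  have hs_conj : conj s = -s :=
    conj_eq_neg_of_sq_eq_neg_ofReal (r := 4 - c ^ 2) (by linarith)
      (by push_cast; linear_combination hs)
  have hconj : (c : ℂ) / 2 - s / 2 = conj ((c : ℂ) / 2 + s / 2) := by
    simp only [map_add, map_div₀, conj_ofReal, map_ofNat, hs_conj]
    ring
  have hnorm : ‖(c : ℂ) / 2 + s / 2‖ = 1 :=
    norm_eq_one_of_mul_conj_eq_one <| by
      rw [← hconj]; linear_combination (-1 / 4 : ℂ) * hs
  exact ⟨hnorm, by rw [hconj, norm_conj, hnorm], hconj⟩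

end Complex

/-- At the Dubrovin–Mazzocco singular point p₁ = (a,2,2), the derivative of
g_x = s_z∘s_y (with A=B=C=2a+4) is the matrix Jgx a, whose eigenvalues are
λ₁ = a²/2 - 1 + s/2, λ₂ = a²/2 - 1 - s/2 (where s² = a⁴-4a²) and λ₃ = 1;
for real a ∈ (-2,0)∪(0,2), λ₁ and λ₂ are a complex conjugate pair of modulus one. -/
theorem stmt7 (a s : ℂ) (hs : s ^ 2 = a ^ 4 - 4 * a ^ 2) :
    (∀ v : ℂ × ℂ × ℂ,
      fderiv ℂ (gxMap (2 * a + 4) (2 * a + 4)) (a, 2, 2) v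
        = (v.1, -2 * v.1 - v.2.1 - a * v.2.2,
            (2 * a - 2) * v.1 + a * v.2.1 + (a ^ 2 - 1) * v.2.2))
    ∧
    (∀ lam : ℂ,
      Matrix.det (lam • (1 : Matrix (Fin 3) (Fin 3) ℂ) - Jgx a)
        = (lam - (a ^ 2 / 2 - 1 + s / 2)) * (lam - (a ^ 2 / 2 - 1 - s / 2)) * (lam - 1))
    ∧
    (∀ t : ℝ, a = (t : ℂ) →
      (t ∈ Set.Ioo (-2 : ℝ) 0 ∨ t ∈ Set.Ioo (0 : ℝ) 2) →
      ‖a ^ 2 / 2 - 1 + s / 2‖ = 1 ∧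
      ‖a ^ 2 / 2 - 1 - s / 2‖ = 1 ∧
      a ^ 2 / 2 - 1 - s / 2 = starRingEnd ℂ (a ^ 2 / 2 - 1 + s / 2)) := by
  have hs' : s ^ 2 = (a ^ 2 - 2) ^ 2 - 4 := by linear_combination hs
  refine ⟨fun v ↦ ?_, fun lam ↦ ?_, ?_⟩
  · rw [fderiv_gxMap_apply]
    simp only [Prod.mk.injEq, true_and]
    constructor <;> ring
  · rw [det_smul_one_sub_Jgx, quadratic_eq_mul_of_sq_eq_discrim hs']
    ring
  · rintro t rfl ht
    have ht2 : 0 < t ^ 2 ∧ t ^ 2 < 4 := by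
      rcases ht with ⟨h₁, h₂⟩ | ⟨h₁, h₂⟩ <;> constructor <;> nlinarith
    have hc : (t ^ 2 - 2) ^ 2 < 4 := by nlinarith
    have hcast : ((t ^ 2 - 2 : ℝ) : ℂ) / 2 = (t : ℂ) ^ 2 / 2 - 1 := by push_cast; ring
    have hunit := Complex.conj_unit_pair_of_sq_lt_four hc (by push_cast; exact hs')
    rwa [hcast] at hunit

end
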